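/- arXiv:2003.03326 — 2 statements merged into one kernel-verified Lean document; each statement's English description precedes it below -/
import Mathlib

section
/- Suppose $T_j:\mathcal{Y}_j\to\mathcal{M}(X)$ are positive linear operators on $p_j$-convex normed lattices $\mathcal{Y}_j$ ($1\leq p_j<\infty$), $\theta_j>0$ with $\sum_j\theta_j=1$, and the scalar inequality $\int_X\prod_{j=1}^d|T_jf_j|^{p_j\theta_j}\,d\mu\leq B\prod_{j=1}^d\|f_j\|_{\mathcal{Y}_j}^{p_j\theta_j}$ holds for all $f_j$. Then the vector-valued inequality $\int_X\prod_{j=1}^d\left(\sum_{k=1}^N|T_jf_{jk}|^{p_j}\right)^{\theta_j}d\mu\leq B\prod_{j=1}^d C_{p_j}(\mathcal{Y}_j)^{p_j\theta_j}\prod_{j=1}^d\left(\sum_{k=1}^N\|f_{jk}\|_{\mathcal{Y}_j}^{p_j}\right)^{\theta_j}$ holds for all $N$ and all $f_{jk}\in\mathcal{Y}_j$. -/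
/-! For a positive operator `T` and finitely many `f_k`, the pointwise bound
`‖(T f_k x)_k‖_p ≤ T (‖(f_k ·)_k‖_p) x` comes from duality in `ℓ^p`: a norming functional of the
left-hand side is a finite linear combination of coordinates, so it commutes with `T`, and at
every point it is bounded by the `ℓ^p` norm, so positivity of `T` applies. Applying the scalar
inequality to `g_j = (∑_k |f_{jk}|^{p_j})^{1/p_j}` and bounding the norm of `g_j` by
`p_j`-convexity gives the vector-valued inequality. -/

open MeasureTheory ENNReal

theorem PiLp.norm_toLp_ofReal {ι : Type*} [Fintype ι] {p : ℝ} (hp : 0 < p) (v : ι → ℝ) :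
    ‖WithLp.toLp (ENNReal.ofReal p) v‖ = (∑ k, |v k| ^ p) ^ (1 / p) := by
  rw [PiLp.norm_eq_sum (by rwa [ENNReal.toReal_ofReal hp.le]), ENNReal.toReal_ofReal hp.le]
  simp [Real.norm_eq_abs]

namespace LinearMap

variable {α X : Type*} (T : (α → ℝ) →ₗ[ℝ] (X → ℝ))

theorem apply_mono_of_nonneg (hT : ∀ f, 0 ≤ f → 0 ≤ T f) {f g : α → ℝ} (hfg : f ≤ g) (x : X) :
    T f x ≤ T g x := by
  simpa [map_sub] using hT (g - f) (sub_nonneg.2 hfg) x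

theorem apply_pi_comm {ι : Type*} [Fintype ι] (φ : (ι → ℝ) →ₗ[ℝ] ℝ) (f : ι → α → ℝ) (x : X) :
    φ (fun k => T (f k) x) = T (fun y => φ (fun k => f k y)) x := by
  classical
  set e : ι → ℝ := fun k => φ (fun j => if k = j then 1 else 0)
  have hcoord : (fun y => φ (fun k => f k y)) = ∑ k, e k • f k := by
    ext y
    rw [φ.pi_apply_eq_sum_univ]
    simp [Finset.sum_apply, e, mul_comm]
  rw [hcoord, φ.pi_apply_eq_sum_univ, map_sum]
  simp [Finset.sum_apply, e, mul_comm]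

theorem norm_toLp_apply_le (hT : ∀ f, 0 ≤ f → 0 ≤ T f) {ι : Type*} [Fintype ι]
    (p : ℝ≥0∞) [Fact (1 ≤ p)] (f : ι → α → ℝ) (x : X) :
    ‖WithLp.toLp p (fun k => T (f k) x)‖ ≤ T (fun y => ‖WithLp.toLp p (fun k => f k y)‖) x := by
  obtain ⟨g, hg, hgx⟩ := exists_dual_vector'' ℝ (WithLp.toLp p (fun k => T (f k) x))
  let φ : (ι → ℝ) →ₗ[ℝ] ℝ := g.toLinearMap ∘ₗ (WithLp.linearEquiv p ℝ (ι → ℝ)).symm.toLinearMap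
  have hφ : ∀ v, φ v = g (WithLp.toLp p v) := fun v => rfl
  calc ‖WithLp.toLp p (fun k => T (f k) x)‖ = T (fun y => φ (fun k => f k y)) x := by
        rw [← apply_pi_comm, hφ, hgx]; rfl
    _ ≤ _ := by
      refine T.apply_mono_of_nonneg hT (fun y => ?_) x
      calc φ (fun k => f k y) ≤ ‖g (WithLp.toLp p (fun k => f k y))‖ := (le_abs_self _).trans_eq rfl
        _ ≤ _ := by simpa using g.le_of_opNorm_le hg (WithLp.toLp p (fun k => f k y))

theorem rpow_sum_abs_apply_le (hT : ∀ f, 0 ≤ f → 0 ≤ T f) {ι : Type*} [Fintype ι]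
    {p : ℝ} (hp : 1 ≤ p) (f : ι → α → ℝ) (x : X) :
    (∑ k, |T (f k) x| ^ p) ^ (1 / p) ≤ T (fun y => (∑ k, |f k y| ^ p) ^ (1 / p)) x := by
  have : Fact (1 ≤ ENNReal.ofReal p) := ⟨by simpa using ENNReal.ofReal_le_ofReal hp⟩
  have hp0 : 0 < p := zero_lt_one.trans_le hp
  simpa only [PiLp.norm_toLp_ofReal hp0] using T.norm_toLp_apply_le hT (ENNReal.ofReal p) f x

end LinearMap

theorem ENNReal.ofReal_rpow_sum_rpow {ι : Type*} [Fintype ι] {a : ι → ℝ} (ha : ∀ k, 0 ≤ a k)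
    {p : ℝ} (hp : 0 < p) (θ : ℝ) :
    ENNReal.ofReal ((∑ k, a k ^ p) ^ (1 / p)) ^ (p * θ) = (∑ k, ENNReal.ofReal (a k) ^ p) ^ θ := by
  have hsum : 0 ≤ ∑ k, a k ^ p := Finset.sum_nonneg fun k _ => Real.rpow_nonneg (ha k) p
  rw [← ENNReal.ofReal_rpow_of_nonneg hsum (by positivity), ← ENNReal.rpow_mul,
    show 1 / p * (p * θ) = θ by field_simp,
    ENNReal.ofReal_sum_of_nonneg fun k _ => Real.rpow_nonneg (ha k) p]
  simp_rw [ENNReal.ofReal_rpow_of_nonneg (ha _) hp.le]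

theorem stmt3_general
    {X : Type*} [MeasurableSpace X] (μ : Measure X)
    {d : ℕ} {α : Fin d → Type*}
    (Nrm : ∀ j, (α j → ℝ) → ℝ) (hNrm : ∀ j f, 0 ≤ Nrm j f)
    (T : ∀ j, (α j → ℝ) →ₗ[ℝ] (X → ℝ))
    (hpos : ∀ j (f : α j → ℝ), 0 ≤ f → 0 ≤ T j f)
    (p : Fin d → ℝ) (hp : ∀ j, 1 ≤ p j)
    (θ : Fin d → ℝ) (hθ : ∀ j, 0 < θ j)
    (C : Fin d → ℝ)
    (hconv : ∀ j (N : ℕ) (f : Fin N → α j → ℝ),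
      Nrm j (fun y => (∑ k, |f k y| ^ (p j)) ^ (1 / p j))
        ≤ C j * (∑ k, Nrm j (f k) ^ (p j)) ^ (1 / p j))
    (B : ℝ≥0∞)
    (hscalar : ∀ f : ∀ j, α j → ℝ,
      ∫⁻ x, ∏ j, (ENNReal.ofReal |T j (f j) x|) ^ (p j * θ j) ∂μ
        ≤ B * ∏ j, ENNReal.ofReal (Nrm j (f j)) ^ (p j * θ j)) :
    ∀ (N : ℕ) (f : ∀ j, Fin N → α j → ℝ),
      ∫⁻ x, ∏ j, (∑ k, ENNReal.ofReal |T j (f j k) x| ^ (p j)) ^ (θ j) ∂μ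
        ≤ B * (∏ j, ENNReal.ofReal (C j) ^ (p j * θ j)) *
          ∏ j, (∑ k, ENNReal.ofReal (Nrm j (f j k)) ^ (p j)) ^ (θ j) := by
  intro N f
  have hp0 j : 0 < p j := zero_lt_one.trans_le (hp j)
  have hpθ j : 0 ≤ p j * θ j := (mul_pos (hp0 j) (hθ j)).le
  let G j : α j → ℝ := fun y => (∑ k, |f j k y| ^ p j) ^ (1 / p j)
  have hpointwise x : ∏ j, (∑ k, ENNReal.ofReal |T j (f j k) x| ^ p j) ^ θ j
      ≤ ∏ j, ENNReal.ofReal |T j (G j) x| ^ (p j * θ j) := by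
    refine Finset.prod_le_prod' fun j _ => ?_
    rw [← ENNReal.ofReal_rpow_sum_rpow (fun k => abs_nonneg _) (hp0 j)]
    refine ENNReal.rpow_le_rpow (ENNReal.ofReal_le_ofReal ?_) (hpθ j)
    exact ((T j).rpow_sum_abs_apply_le (hpos j) (hp j) (f j) x).trans (le_abs_self _)
  have hnorm j : ENNReal.ofReal (Nrm j (G j)) ^ (p j * θ j)
      ≤ ENNReal.ofReal (C j) ^ (p j * θ j) * (∑ k, ENNReal.ofReal (Nrm j (f j k)) ^ p j) ^ θ j := by
    rw [← ENNReal.ofReal_rpow_sum_rpow (fun k => hNrm j _) (hp0 j),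
      ← ENNReal.mul_rpow_of_nonneg _ _ (hpθ j),
      ← ENNReal.ofReal_mul' (Real.rpow_nonneg (Finset.sum_nonneg fun k _ =>
        Real.rpow_nonneg (hNrm j _) _) _)]
    exact ENNReal.rpow_le_rpow (ENNReal.ofReal_le_ofReal (hconv j N (f j))) (hpθ j)
  calc ∫⁻ x, ∏ j, (∑ k, ENNReal.ofReal |T j (f j k) x| ^ p j) ^ θ j ∂μ
      ≤ ∫⁻ x, ∏ j, ENNReal.ofReal |T j (G j) x| ^ (p j * θ j) ∂μ := lintegral_mono hpointwise
    _ ≤ B * ∏ j, ENNReal.ofReal (Nrm j (G j)) ^ (p j * θ j) := hscalar G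
    _ ≤ B * ∏ j, (ENNReal.ofReal (C j) ^ (p j * θ j)
          * (∑ k, ENNReal.ofReal (Nrm j (f j k)) ^ p j) ^ θ j) := by
      gcongr with j
      exact hnorm j
    _ = _ := by rw [Finset.prod_mul_distrib, mul_assoc]

/-- Scalar-valued to vector-valued upgrade for positive linear operators on
`p_j`-convex normed function lattices. -/
theorem stmt3
    {X : Type*} [MeasurableSpace X] (μ : Measure X)
    {d : ℕ} {α : Fin d → Type*}
    (Nrm : ∀ j, (α j → ℝ) → ℝ) (hNrm : ∀ j f, 0 ≤ Nrm j f)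
    (T : ∀ j, (α j → ℝ) →ₗ[ℝ] (X → ℝ))
    (hpos : ∀ j (f : α j → ℝ), 0 ≤ f → 0 ≤ T j f)
    (p : Fin d → ℝ) (hp : ∀ j, 1 ≤ p j)
    (θ : Fin d → ℝ) (hθ : ∀ j, 0 < θ j) (hθsum : ∑ j, θ j = 1)
    (C : Fin d → ℝ) (hC : ∀ j, 1 ≤ C j)
    (hconv : ∀ j (N : ℕ) (f : Fin N → α j → ℝ),
      Nrm j (fun y => (∑ k, |f k y| ^ (p j)) ^ (1 / p j))
        ≤ C j * (∑ k, Nrm j (f k) ^ (p j)) ^ (1 / p j))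
    (B : ℝ≥0∞)
    (hscalar : ∀ f : ∀ j, α j → ℝ,
      ∫⁻ x, ∏ j, (ENNReal.ofReal |T j (f j) x|) ^ (p j * θ j) ∂μ
        ≤ B * ∏ j, ENNReal.ofReal (Nrm j (f j)) ^ (p j * θ j)) :
    ∀ (N : ℕ) (f : ∀ j, Fin N → α j → ℝ),
      ∫⁻ x, ∏ j, (∑ k, ENNReal.ofReal |T j (f j k) x| ^ (p j)) ^ (θ j) ∂μ
        ≤ B * (∏ j, ENNReal.ofReal (C j) ^ (p j * θ j)) *
          ∏ j, (∑ k, ENNReal.ofReal (Nrm j (f j k)) ^ (p j)) ^ (θ j) :=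
  stmt3_general μ Nrm hNrm T hpos p hp θ hθ C hconv B hscalar
end

section
/- Suppose, for positive linear operators $T_j:L^{r_j}(\mathbb{R})\to\mathcal{M}(\mathbb{R}^d)$ satisfying $\int\prod_j|T_jf_j|^{\gamma_j}\lesssim\prod_j\|f_j\|_{r_j}^{\gamma_j}$, the exponents $(p_j)$ with $0<p_j<\infty$ always admit weights $(\phi_j)$ with $\prod_j\phi_j^{\gamma_j/p_j}\geq1$ a.e. and $(\int|T_jf_j|^{p_j}\phi_j)^{1/p_j}\lesssim\|f_j\|_{r_j}$. Then necessarily $\sum_{j=1}^d\gamma_j/p_j=1$. -/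
/-!
Suppose `Λ := ∑ γ_j / p_j ≠ 1`. Choose `Φ_j ∈ L^{γ_j} \ L^{γ_j/Λ}` (a power of `t` near `0` or near
`∞`) and the rank-one operators `T_j f (x) = (∫₀¹ f) Φ_j(x_j)`; by Fubini they satisfy the product
bound. Testing the disentangled bounds on `f = 1_{(0,1)}` makes every `∫ Φ_j(x_j)^{p_j} φ_j` finite,
and Hölder with exponents `Λ p_j / γ_j`, together with `∏ φ_j^{γ_j/p_j} ≥ 1`, then bounds
`∫ ∏ Φ_j(x_j)^{γ_j/Λ} = ∏ ∫ Φ_j^{γ_j/Λ} = ∞`.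
-/

open MeasureTheory ENNReal

theorem lintegral_fin_nat_prod_eq_prod {n : ℕ} {E : Type*} [MeasurableSpace E]
    {μ : Fin n → Measure E} [∀ i, SigmaFinite (μ i)] {f : Fin n → E → ℝ≥0∞}
    (hf : ∀ i, Measurable (f i)) :
    ∫⁻ x, ∏ i, f i (x i) ∂(Measure.pi μ) = ∏ i, ∫⁻ x, f i x ∂(μ i) := by
  induction n with
  | zero => simp
  | succ n ih =>
    have hprod : ∀ {m} (g : Fin m → E → ℝ≥0∞), (∀ i, Measurable (g i)) →
        Measurable fun x : Fin m → E ↦ ∏ i, g i (x i) :=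
      fun g hg ↦ Finset.measurable_prod _ fun i _ ↦ (hg i).comp (measurable_pi_apply i)
    calc
      _ = ∫⁻ x : E × (Fin n → E), f 0 x.1 * ∏ i : Fin n, f i.succ (x.2 i)
            ∂((μ 0).prod (Measure.pi fun i ↦ μ i.succ)) := by
        rw [← ((measurePreserving_piFinSuccAbove μ 0).symm).lintegral_comp (hprod f hf)]
        simp_rw [MeasurableEquiv.piFinSuccAbove_symm_apply, Fin.insertNthEquiv,
          Fin.prod_univ_succ, Fin.insertNth_zero, Equiv.coe_fn_mk, Fin.cons_succ,
          Fin.cons_zero, Fin.zero_succAbove, cast_eq]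
      _ = (∫⁻ x, f 0 x ∂μ 0) * ∏ i : Fin n, ∫⁻ x, f i.succ x ∂(μ i.succ) := by
        rw [← ih fun i ↦ hf i.succ]
        exact lintegral_prod_mul (hf 0).aemeasurable (hprod _ fun i ↦ hf i.succ).aemeasurable
      _ = ∏ i, ∫⁻ x, f i x ∂(μ i) := (Fin.prod_univ_succ fun i ↦ ∫⁻ x, f i x ∂(μ i)).symm

theorem enorm_integral_le_eLpNorm {α E : Type*} [MeasurableSpace α] {μ : Measure α}
    [IsProbabilityMeasure μ] [NormedAddCommGroup E] [NormedSpace ℝ E] {q : ℝ≥0∞} (hq : 1 ≤ q)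
    {f : α → E} (hf : AEStronglyMeasurable f μ) :
    ‖∫ x, f x ∂μ‖ₑ ≤ eLpNorm f q μ :=
  calc ‖∫ x, f x ∂μ‖ₑ ≤ ∫⁻ x, ‖f x‖ₑ ∂μ := enorm_integral_le_lintegral_enorm f
    _ = eLpNorm f 1 μ := eLpNorm_one_eq_lintegral_enorm.symm
    _ ≤ eLpNorm f q μ := eLpNorm_le_eLpNorm_of_exponent_le hq hf

section PowerFunctions

open Set

theorem lintegral_ofReal_indicator_rpow_rpow {S : Set ℝ} (hS : MeasurableSet S)
    (hS0 : S ⊆ Ioi 0) (e : ℝ) {c : ℝ} (hc : 0 < c) :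
    ∫⁻ t, ENNReal.ofReal (S.indicator (· ^ e) t) ^ c = ∫⁻ t in S, ENNReal.ofReal (t ^ (e * c)) := by
  rw [← lintegral_indicator hS]
  congr 1 with t
  by_cases ht : t ∈ S
  · have ht0 : 0 < t := hS0 ht
    rw [indicator_of_mem ht, indicator_of_mem ht, ofReal_rpow_of_nonneg (by positivity) hc.le,
      ← Real.rpow_mul ht0.le]
  · simp [indicator_of_notMem ht, hc]

theorem setLIntegral_ofReal_rpow_lt_top_iff {S : Set ℝ} (hS : MeasurableSet S)
    (hS0 : S ⊆ Ioi 0) (e : ℝ) :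
    ∫⁻ t in S, ENNReal.ofReal (t ^ e) < ⊤ ↔ IntegrableOn (· ^ e) S := by
  have hnn : 0 ≤ᵐ[volume.restrict S] fun t : ℝ ↦ t ^ e := by
    filter_upwards [self_mem_ae_restrict hS] with t ht
    exact Real.rpow_nonneg (hS0 ht).le e
  rw [lt_top_iff_ne_top, lintegral_ofReal_ne_top_iff_integrable
    (measurable_id'.pow_const e).aestronglyMeasurable hnn, IntegrableOn]

/-- The witness is `t ^ (-1/b)` on `(0, 1)` if `a < b`, on `(1, ∞)` if `b < a`: its `b`-th power
is `1/t`, and its `a`-th power is integrable there. -/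
theorem exists_lintegral_rpow_lt_top_and_eq_top {a b : ℝ} (ha : 0 < a) (hb : 0 < b)
    (hab : a ≠ b) :
    ∃ Φ : ℝ → ℝ, Measurable Φ ∧ 0 ≤ Φ ∧ ∫⁻ t, ENNReal.ofReal (Φ t) ^ a < ⊤ ∧
      ∫⁻ t, ENNReal.ofReal (Φ t) ^ b = ⊤ := by
  set S : Set ℝ := if a < b then Ioo 0 1 else Ioi 1
  have hS : MeasurableSet S := by
    unfold S; split_ifs
    exacts [measurableSet_Ioo, measurableSet_Ioi]
  have hS0 : S ⊆ Ioi 0 := by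
    unfold S; split_ifs
    · exact Ioo_subset_Ioi_self
    · exact Ioi_subset_Ioi zero_le_one
  refine ⟨S.indicator (· ^ (-b⁻¹)), (measurable_id.pow_const _).indicator hS,
    indicator_nonneg fun t ht ↦ Real.rpow_nonneg (hS0 ht).le _, ?_, ?_⟩
  · rw [lintegral_ofReal_indicator_rpow_rpow hS hS0 _ ha,
      setLIntegral_ofReal_rpow_lt_top_iff hS hS0]
    unfold S; split_ifs with h
    · rw [intervalIntegral.integrableOn_Ioo_rpow_iff zero_lt_one]
      have : a / b < 1 := (div_lt_one hb).mpr h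
      linarith [show -b⁻¹ * a = - (a / b) by ring]
    · rw [integrableOn_Ioi_rpow_iff zero_lt_one]
      have : 1 < a / b := (one_lt_div hb).mpr (lt_of_le_of_ne (not_lt.mp h) hab.symm)
      linarith [show -b⁻¹ * a = - (a / b) by ring]
  · rw [lintegral_ofReal_indicator_rpow_rpow hS hS0 _ hb, ← not_lt_top_iff,
      setLIntegral_ofReal_rpow_lt_top_iff hS hS0, show -b⁻¹ * b = -1 by field_simp]
    unfold S; split_ifs
    · simp [intervalIntegral.integrableOn_Ioo_rpow_iff zero_lt_one]
    · simp [integrableOn_Ioi_rpow_iff zero_lt_one]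

end PowerFunctions

section WeightedHolder

variable {ι : Type*} [Fintype ι] {γ p : ι → ℝ} {Λ : ℝ}

theorem prod_rpow_le_prod_mul_rpow (hγ : ∀ j, 0 ≤ γ j) (hp : ∀ j, 0 < p j) (hΛ : 0 < Λ)
    (a w : ι → ℝ≥0∞) (hw : 1 ≤ ∏ j, w j ^ (γ j / p j)) :
    ∏ j, a j ^ (γ j / Λ) ≤ ∏ j, (a j ^ p j * w j) ^ (γ j / (Λ * p j)) := by
  have hq : ∀ j, 0 ≤ γ j / (Λ * p j) := fun j ↦ div_nonneg (hγ j) (mul_pos hΛ (hp j)).le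
  calc ∏ j, a j ^ (γ j / Λ)
      = (∏ j, a j ^ (γ j / Λ)) * 1 ^ Λ⁻¹ := by rw [one_rpow, mul_one]
    _ ≤ (∏ j, a j ^ (γ j / Λ)) * (∏ j, w j ^ (γ j / p j)) ^ Λ⁻¹ := by
      gcongr
    _ = ∏ j, (a j ^ p j * w j) ^ (γ j / (Λ * p j)) := by
      rw [← prod_rpow_of_nonneg (inv_nonneg.mpr hΛ.le), ← Finset.prod_mul_distrib]
      refine Finset.prod_congr rfl fun j _ ↦ ?_
      have hp0 := (hp j).ne'
      rw [mul_rpow_of_nonneg _ _ (hq j), ← rpow_mul, ← rpow_mul]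
      congr 2 <;> field_simp

/-- Hölder's inequality with exponents `Λ p_j / γ_j`, whose reciprocals sum to one. -/
theorem lintegral_prod_rpow_le_of_one_le_prod_rpow {α : Type*} [MeasurableSpace α]
    {μ : Measure α} {F φ : ι → α → ℝ≥0∞} (hF : ∀ j, AEMeasurable (F j) μ)
    (hφ : ∀ j, AEMeasurable (φ j) μ) (hγ : ∀ j, 0 ≤ γ j) (hp : ∀ j, 0 < p j)
    (hΛ : ∑ j, γ j / p j = Λ) (hΛ0 : 0 < Λ) (hw : ∀ᵐ x ∂μ, 1 ≤ ∏ j, φ j x ^ (γ j / p j)) :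
    ∫⁻ x, ∏ j, F j x ^ (γ j / Λ) ∂μ ≤
      ∏ j, (∫⁻ x, F j x ^ p j * φ j x ∂μ) ^ (γ j / (Λ * p j)) := by
  have hq : ∑ j, γ j / (Λ * p j) = 1 := by
    simp_rw [mul_comm Λ, ← div_div, ← Finset.sum_div, hΛ, div_self hΛ0.ne']
  calc ∫⁻ x, ∏ j, F j x ^ (γ j / Λ) ∂μ
      ≤ ∫⁻ x, ∏ j, (F j x ^ p j * φ j x) ^ (γ j / (Λ * p j)) ∂μ := by
        refine lintegral_mono_ae ?_
        filter_upwards [hw] with x hx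
        exact prod_rpow_le_prod_mul_rpow hγ hp hΛ0 _ _ hx
    _ ≤ _ := lintegral_prod_norm_pow_le _ (fun j _ ↦ ((hF j).pow_const _).mul (hφ j)) hq
        fun j _ ↦ div_nonneg (hγ j) (mul_pos hΛ0 (hp j)).le

end WeightedHolder

section RankOne

open Set

instance isProbabilityMeasure_restrict_Ioo_zero_one :
    IsProbabilityMeasure (volume.restrict (Ioo (0 : ℝ) 1)) :=
  ⟨by simp [Real.volume_Ioo]⟩

theorem enorm_setIntegral_Ioo_zero_one_le_eLpNorm {q : ℝ≥0∞} (hq : 1 ≤ q) {f : ℝ → ℝ}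
    (hf : AEStronglyMeasurable f volume) :
    ‖∫ t in Ioo 0 1, f t‖ₑ ≤ eLpNorm f q volume :=
  (enorm_integral_le_eLpNorm hq hf.restrict).trans (eLpNorm_mono_measure f Measure.restrict_le_self)

theorem MeasureTheory.MemLp.integrableOn_Ioo_zero_one {q : ℝ≥0∞} (hq : 1 ≤ q) {f : ℝ → ℝ}
    (hf : MemLp f q volume) : IntegrableOn f (Ioo 0 1) :=
  (hf.restrict _).integrable hq

variable {ι : Type*} (Φ : ι → ℝ → ℝ)

/-- The rank-one operators `T_j f (x) = (∫ f g_j) Φ_j(x_j)` of the paper, with `g_j = 1_{(0,1)}`. -/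
noncomputable def rankOneOp (j : ι) (f : ℝ → ℝ) (x : ι → ℝ) : ℝ :=
  (∫ t in Ioo 0 1, f t) * Φ j (x j)

theorem rankOneOp_add (j : ι) {f f' : ℝ → ℝ} (hf : IntegrableOn f (Ioo 0 1))
    (hf' : IntegrableOn f' (Ioo 0 1)) :
    rankOneOp Φ j (f + f') = rankOneOp Φ j f + rankOneOp Φ j f' := by
  ext x
  simp only [rankOneOp, Pi.add_apply, integral_add hf hf', add_mul]

theorem rankOneOp_smul (j : ι) (c : ℝ) (f : ℝ → ℝ) :
    rankOneOp Φ j (c • f) = c • rankOneOp Φ j f := by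
  ext x
  simp only [rankOneOp, Pi.smul_apply, smul_eq_mul, integral_const_mul, mul_assoc]

variable {Φ}

theorem rankOneOp_nonneg {j : ι} (hΦ : 0 ≤ Φ j) {f : ℝ → ℝ} (hf : 0 ≤ f) :
    0 ≤ rankOneOp Φ j f :=
  fun x ↦ mul_nonneg (integral_nonneg hf) (hΦ (x j))

theorem measurable_rankOneOp {j : ι} (hΦ : Measurable (Φ j)) (f : ℝ → ℝ) :
    Measurable (rankOneOp Φ j f) :=
  measurable_const.mul (hΦ.comp (measurable_pi_apply j))

theorem rankOneOp_indicator_one (j : ι) :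
    rankOneOp Φ j ((Ioo 0 1).indicator 1) = fun x ↦ Φ j (x j) := by
  ext x
  simp [rankOneOp, integral_indicator measurableSet_Ioo]

theorem lintegral_rpow_mul_lt_top_of_rankOneOp_le [Fintype ι] {j : ι} (hΦ : 0 ≤ Φ j) {p : ℝ}
    (hp : 0 < p) {φ : (ι → ℝ) → ℝ≥0∞} {r C : ℝ≥0∞} (hC : C ≠ ⊤)
    (hbound : ∀ f : ℝ → ℝ, Measurable f → MemLp f r volume →
      (∫⁻ x, ENNReal.ofReal |rankOneOp Φ j f x| ^ p * φ x) ^ (1 / p) ≤ C * eLpNorm f r volume) :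
    ∫⁻ x, ENNReal.ofReal (Φ j (x j)) ^ p * φ x < ⊤ := by
  have hF : MemLp ((Ioo (0 : ℝ) 1).indicator (1 : ℝ → ℝ)) r volume :=
    memLp_indicator_const _ measurableSet_Ioo 1 (Or.inr (by simp [Real.volume_Ioo]))
  have h := hbound _ (measurable_one.indicator measurableSet_Ioo) hF
  simp_rw [rankOneOp_indicator_one, abs_of_nonneg (hΦ _)] at h
  exact (rpow_lt_top_iff_of_pos (one_div_pos.mpr hp)).mp (h.trans_lt (mul_lt_top hC.lt_top hF.2))

theorem ofReal_abs_rankOneOp {j : ι} (hΦ : 0 ≤ Φ j) (f : ℝ → ℝ) (x : ι → ℝ) :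
    ENNReal.ofReal |rankOneOp Φ j f x| =
      ‖∫ t in Ioo 0 1, f t‖ₑ * ENNReal.ofReal (Φ j (x j)) := by
  rw [rankOneOp, abs_mul, ENNReal.ofReal_mul (abs_nonneg _), Real.enorm_eq_ofReal_abs,
    abs_of_nonneg (hΦ (x j))]

theorem lintegral_prod_rankOneOp_le {n : ℕ} {Φ : Fin n → ℝ → ℝ} (hΦm : ∀ j, Measurable (Φ j))
    (hΦ : ∀ j, 0 ≤ Φ j) {γ : Fin n → ℝ} (hγ : ∀ j, 0 ≤ γ j) {r : Fin n → ℝ≥0∞}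
    (hr : ∀ j, 1 ≤ r j) {f : Fin n → ℝ → ℝ} (hf : ∀ j, AEStronglyMeasurable (f j) volume) :
    ∫⁻ x, ∏ j, ENNReal.ofReal |rankOneOp Φ j (f j) x| ^ γ j ≤
      (∏ j, ∫⁻ t, ENNReal.ofReal (Φ j t) ^ γ j) * ∏ j, eLpNorm (f j) (r j) volume ^ γ j := by
  have hΦγ : ∀ j, Measurable fun t ↦ ENNReal.ofReal (Φ j t) ^ γ j :=
    fun j ↦ (hΦm j).ennreal_ofReal.pow_const _
  have hprod : Measurable fun x : Fin n → ℝ ↦ ∏ j, ENNReal.ofReal (Φ j (x j)) ^ γ j :=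
    Finset.measurable_prod _ fun j _ ↦ (hΦγ j).comp (measurable_pi_apply j)
  calc ∫⁻ x, ∏ j, ENNReal.ofReal |rankOneOp Φ j (f j) x| ^ γ j
      = ∫⁻ x : Fin n → ℝ, (∏ j, ‖∫ t in Ioo 0 1, f j t‖ₑ ^ γ j) *
          ∏ j, ENNReal.ofReal (Φ j (x j)) ^ γ j := by
        simp_rw [ofReal_abs_rankOneOp (hΦ _), mul_rpow_of_nonneg _ _ (hγ _),
          Finset.prod_mul_distrib]
    _ = (∏ j, ‖∫ t in Ioo 0 1, f j t‖ₑ ^ γ j) * ∏ j, ∫⁻ t, ENNReal.ofReal (Φ j t) ^ γ j := by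
        rw [lintegral_const_mul _ hprod, volume_pi, lintegral_fin_nat_prod_eq_prod hΦγ]
    _ ≤ (∏ j, eLpNorm (f j) (r j) volume ^ γ j) * ∏ j, ∫⁻ t, ENNReal.ofReal (Φ j t) ^ γ j := by
        gcongr with j
        · exact hγ j
        · exact enorm_setIntegral_Ioo_zero_one_le_eLpNorm (hr j) (hf j)
    _ = _ := mul_comm _ _

end RankOne

/-- Necessity of the homogeneity condition `∑ γ_j / p_j = 1` in the Basic Question. -/
theorem stmt14 {d : ℕ} (hd : 0 < d) (r γ p : Fin d → ℝ)
    (hr : ∀ j, 1 ≤ r j) (hγ : ∀ j, 0 < γ j) (hp : ∀ j, 0 < p j)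
    (H : ∀ T : ∀ _ : Fin d, (ℝ → ℝ) → (Fin d → ℝ) → ℝ,
      -- `T j` is linear (on `L^{r_j}`) and positive, mapping measurable functions
      -- to measurable functions
      (∀ j (f f' : ℝ → ℝ), MemLp f (ENNReal.ofReal (r j)) volume →
        MemLp f' (ENNReal.ofReal (r j)) volume → T j (f + f') = T j f + T j f') →
      (∀ j (c : ℝ) (f : ℝ → ℝ), T j (c • f) = c • T j f) →
      (∀ j (f : ℝ → ℝ), 0 ≤ f → 0 ≤ T j f) →
      (∀ j (f : ℝ → ℝ), Measurable f → Measurable (T j f)) →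
      -- the product bound `∫ ∏ |T_j f_j|^{γ_j} ≲ ∏ ‖f_j‖_{r_j}^{γ_j}`
      (∃ C : ℝ≥0∞, C ≠ ⊤ ∧ ∀ f : Fin d → ℝ → ℝ,
        (∀ j, Measurable (f j)) →
        (∀ j, MemLp (f j) (ENNReal.ofReal (r j)) volume) →
        ∫⁻ x : Fin d → ℝ, ∏ j, ENNReal.ofReal |T j (f j) x| ^ (γ j)
          ≤ C * ∏ j, eLpNorm (f j) (ENNReal.ofReal (r j)) volume ^ (γ j)) →
      -- then there are disentangling weights
      ∃ φ : Fin d → (Fin d → ℝ) → ℝ≥0∞, (∀ j, Measurable (φ j)) ∧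
        (∀ᵐ x : Fin d → ℝ, 1 ≤ ∏ j, φ j x ^ (γ j / p j)) ∧
        ∃ C' : ℝ≥0∞, C' ≠ ⊤ ∧ ∀ j (f : ℝ → ℝ), Measurable f →
          MemLp f (ENNReal.ofReal (r j)) volume →
          (∫⁻ x : Fin d → ℝ, ENNReal.ofReal |T j f x| ^ (p j) * φ j x) ^ (1 / p j)
            ≤ C' * eLpNorm f (ENNReal.ofReal (r j)) volume) :
    ∑ j, γ j / p j = 1 := by
  by_contra hne
  set Λ := ∑ j, γ j / p j with hΛ
  have hΛ0 : 0 < Λ :=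
    Finset.sum_pos (fun j _ ↦ div_pos (hγ j) (hp j)) ⟨⟨0, hd⟩, Finset.mem_univ _⟩
  have hγΛ : ∀ j, γ j ≠ γ j / Λ := fun j h ↦
    hne ((mul_eq_left₀ (hγ j).ne').mp ((div_eq_iff hΛ0.ne').mp h.symm).symm)
  have hr1 : ∀ j, 1 ≤ ENNReal.ofReal (r j) := fun j ↦ ENNReal.one_le_ofReal.mpr (hr j)
  choose Φ hΦm hΦ0 hΦγ hΦγΛ using fun j ↦
    exists_lintegral_rpow_lt_top_and_eq_top (hγ j) (div_pos (hγ j) hΛ0) (hγΛ j)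
  obtain ⟨φ, hφm, hφ, C', hC', hφbound⟩ := H (rankOneOp Φ)
    (fun j _ _ hf hf' ↦ rankOneOp_add Φ j (hf.integrableOn_Ioo_zero_one (hr1 j))
      (hf'.integrableOn_Ioo_zero_one (hr1 j)))
    (rankOneOp_smul Φ) (fun j _ hf ↦ rankOneOp_nonneg (hΦ0 j) hf)
    (fun j f _ ↦ measurable_rankOneOp (hΦm j) f)
    ⟨_, (prod_lt_top fun j _ ↦ hΦγ j).ne, fun f hf _ ↦
      lintegral_prod_rankOneOp_le hΦm hΦ0 (fun j ↦ (hγ j).le) hr1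
        fun j ↦ (hf j).aestronglyMeasurable⟩
  have hfin : ∀ j, ∫⁻ x, ENNReal.ofReal (Φ j (x j)) ^ p j * φ j x < ⊤ := fun j ↦
    lintegral_rpow_mul_lt_top_of_rankOneOp_le (hΦ0 j) (hp j) hC' (hφbound j)
  have hinfinite : ∫⁻ x : Fin d → ℝ, ∏ j, ENNReal.ofReal (Φ j (x j)) ^ (γ j / Λ) = ⊤ := by
    rw [volume_pi, lintegral_fin_nat_prod_eq_prod fun j ↦ (hΦm j).ennreal_ofReal.pow_const _]
    simp [hΦγΛ, hd.ne']
  refine (lintegral_prod_rpow_le_of_one_le_prod_rpow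
    (F := fun j (x : Fin d → ℝ) ↦ ENNReal.ofReal (Φ j (x j)))
    (fun j ↦ ((hΦm j).ennreal_ofReal.comp (measurable_pi_apply j)).aemeasurable)
    (fun j ↦ (hφm j).aemeasurable) (fun j ↦ (hγ j).le) hp hΛ.symm hΛ0 hφ).not_gt ?_
  rw [hinfinite]
  exact prod_lt_top fun j _ ↦
    rpow_lt_top_of_nonneg (div_nonneg (hγ j).le (mul_pos hΛ0 (hp j)).le) (hfin j).ne
end
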